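/- Let P be a symmetric positive definite n×n real matrix with maximal eigenvalue λ, and let c > 0. Then there exists a unique θ ∈ (0, 1/λ) such that -log det(I - θP) + tr((I - θP)^{-1} - I) = c. -/

import Mathlib

/-!
Diagonalising `P = U diag(μ) Uᴴ`, the left-hand side becomes `F θ = ∑ᵢ φ (1 - θ μᵢ)` with
`φ u = -log u + u⁻¹ - 1`. On `[0, 1/λ)` every `1 - θ μᵢ` lies in `(0, 1]`, where `φ` is
nonnegative and strictly decreasing, so `F` is continuous and strictly increasing with `F 0 = 0`,
and the eigenvalue `λ` alone pushes `F θ` up to `(1 - θλ)⁻¹ - 1`, which reaches `c` inside the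
interval. The intermediate value theorem gives the root, strict monotonicity its uniqueness.
-/

open Set Matrix Unitary

lemma strictAntiOn_neg_log_add_inv_sub_one :
    StrictAntiOn (fun u : ℝ => -Real.log u + (u⁻¹ - 1)) (Ioi 0) := by
  intro u hu v _ huv
  have hlog : Real.log u < Real.log v := Real.log_lt_log hu huv
  have hinv : v⁻¹ < u⁻¹ := inv_strictAnti₀ hu huv
  dsimp only
  linarith

lemma inv_sub_one_le_neg_log_add_inv_sub_one {u : ℝ} (hu0 : 0 ≤ u) (hu1 : u ≤ 1) :
    u⁻¹ - 1 ≤ -Real.log u + (u⁻¹ - 1) := by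
  linarith [Real.log_nonpos hu0 hu1]

lemma neg_log_add_inv_sub_one_nonneg {u : ℝ} (hu0 : 0 < u) (hu1 : u ≤ 1) :
    0 ≤ -Real.log u + (u⁻¹ - 1) :=
  (sub_nonneg.mpr ((one_le_inv₀ hu0).mpr hu1)).trans
    (inv_sub_one_le_neg_log_add_inv_sub_one hu0.le hu1)

lemma mul_lt_one_of_mem_Ico {θ lam : ℝ} (hθ : θ ∈ Ico 0 (1 / lam)) : θ * lam < 1 := by
  rcases le_or_gt lam 0 with hlam | hlam
  · nlinarith [hθ.1]
  · exact (lt_div_iff₀ hlam).mp hθ.2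

lemma exists_mem_Ico_inv_one_sub_mul_sub_one_eq {lam c : ℝ} (hlam : 0 < lam) (hc : 0 ≤ c) :
    ∃ θ ∈ Ico 0 (1 / lam), (1 - θ * lam)⁻¹ - 1 = c := by
  refine ⟨c / ((1 + c) * lam), ⟨by positivity, ?_⟩, ?_⟩
  · rw [div_lt_div_iff₀ (by positivity) hlam]
    nlinarith
  · field_simp
    ring

lemma existsUnique_mem_Ioo_eq_of_strictMonoOn {f : ℝ → ℝ} {a b c x : ℝ}
    (hmono : StrictMonoOn f (Ico a b)) (hcont : ContinuousOn f (Ico a b))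
    (ha : f a < c) (hx : x ∈ Ico a b) (hcx : c ≤ f x) :
    ∃! θ, θ ∈ Ioo a b ∧ f θ = c := by
  obtain ⟨θ, hθ, hfθ⟩ :=
    intermediate_value_Icc hx.1 (hcont.mono (Icc_subset_Ico_right hx.2)) ⟨ha.le, hcx⟩
  have hθa : a < θ := hθ.1.lt_of_ne (by rintro rfl; exact ha.ne hfθ)
  have hθb : θ < b := hθ.2.trans_lt hx.2
  refine ⟨θ, ⟨⟨hθa, hθb⟩, hfθ⟩, fun θ' ⟨hθ', hfθ'⟩ => ?_⟩
  exact hmono.injOn (Ioo_subset_Ico_self hθ') ⟨hθa.le, hθb⟩ (hfθ'.trans hfθ.symm)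

lemma one_sub_mul_pos {θ m lam : ℝ} (hm : m ≤ lam) (hθ : θ ∈ Ico 0 (1 / lam)) :
    0 < 1 - θ * m := by
  nlinarith [mul_lt_one_of_mem_Ico hθ, mul_le_mul_of_nonneg_left hm hθ.1]

section Spectral
variable {ι : Type*} [Fintype ι] {μ : ι → ℝ} {lam : ℝ}

lemma strictMonoOn_sum_neg_log_add_inv_sub_one [Nonempty ι] (hμ : ∀ i, 0 < μ i)
    (hle : ∀ i, μ i ≤ lam) :
    StrictMonoOn (fun θ => ∑ i, (-Real.log (1 - θ * μ i) + ((1 - θ * μ i)⁻¹ - 1)))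
      (Ico 0 (1 / lam)) := by
  intro θ hθ θ' hθ' hlt
  refine Finset.sum_lt_sum_of_nonempty Finset.univ_nonempty fun i _ => ?_
  exact strictAntiOn_neg_log_add_inv_sub_one (one_sub_mul_pos (hle i) hθ')
    (one_sub_mul_pos (hle i) hθ) (by nlinarith [hμ i])

lemma continuousOn_sum_neg_log_add_inv_sub_one (hle : ∀ i, μ i ≤ lam) :
    ContinuousOn (fun θ => ∑ i, (-Real.log (1 - θ * μ i) + ((1 - θ * μ i)⁻¹ - 1)))
      (Ico 0 (1 / lam)) := by
  refine continuousOn_finsetSum _ fun i _ => ?_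
  have hne : ∀ θ ∈ Ico 0 (1 / lam), 1 - θ * μ i ≠ 0 := fun θ hθ =>
    (one_sub_mul_pos (hle i) hθ).ne'
  have h : ContinuousOn (fun θ : ℝ => 1 - θ * μ i) (Ico 0 (1 / lam)) := by fun_prop
  exact (h.log hne).neg.add ((h.inv₀ hne).sub continuousOn_const)

lemma inv_one_sub_mul_sub_one_le_sum (hμ : ∀ i, 0 ≤ μ i) (hle : ∀ i, μ i ≤ lam) {i₀ : ι}
    (hi₀ : μ i₀ = lam) {θ : ℝ} (hθ : θ ∈ Ico 0 (1 / lam)) :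
    (1 - θ * lam)⁻¹ - 1 ≤ ∑ i, (-Real.log (1 - θ * μ i) + ((1 - θ * μ i)⁻¹ - 1)) := by
  have hle_one : ∀ i, 1 - θ * μ i ≤ 1 := fun i => by nlinarith [hμ i, hθ.1]
  calc (1 - θ * lam)⁻¹ - 1
      ≤ -Real.log (1 - θ * μ i₀) + ((1 - θ * μ i₀)⁻¹ - 1) :=
        hi₀ ▸ inv_sub_one_le_neg_log_add_inv_sub_one (one_sub_mul_pos (hle i₀) hθ).le (hle_one i₀)
    _ ≤ _ := Finset.single_le_sum (fun i _ => neg_log_add_inv_sub_one_nonneg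
        (one_sub_mul_pos (hle i) hθ) (hle_one i)) (Finset.mem_univ i₀)

end Spectral

namespace Matrix
variable {ι R : Type*} [Fintype ι] [DecidableEq ι] [CommRing R] [StarRing R]

lemma det_conjStarAlgAut (U : unitary (Matrix ι ι R)) (M : Matrix ι ι R) :
    (conjStarAlgAut R _ U M).det = M.det := by
  rw [conjStarAlgAut_apply, det_mul, det_mul, mul_comm, ← mul_assoc, ← det_mul,
    coe_star_mul_self, det_one, one_mul]

lemma trace_conjStarAlgAut (U : unitary (Matrix ι ι R)) (M : Matrix ι ι R) :
    (conjStarAlgAut R _ U M).trace = M.trace := by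
  rw [conjStarAlgAut_apply, trace_mul_cycle, coe_star_mul_self, one_mul]

lemma inv_conjStarAlgAut (U : unitary (Matrix ι ι R)) (M : Matrix ι ι R) :
    (conjStarAlgAut R _ U M)⁻¹ = conjStarAlgAut R _ U M⁻¹ := by
  have hU : (U : Matrix ι ι R)⁻¹ = star U := inv_eq_left_inv (coe_star_mul_self U)
  have hU' : (star U : Matrix ι ι R)⁻¹ = U := inv_eq_left_inv (coe_mul_star_self U)
  rw [conjStarAlgAut_apply, conjStarAlgAut_apply, Matrix.mul_inv_rev, Matrix.mul_inv_rev, hU, hU',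
    mul_assoc, coe_star]

lemma inv_diagonal_of_ne_zero {K : Type*} [Field K] {d : ι → K} (hd : ∀ i, d i ≠ 0) :
    (diagonal d)⁻¹ = diagonal d⁻¹ :=
  inv_eq_right_inv <| by
    rw [diagonal_mul_diagonal, ← diagonal_one]
    exact congrArg diagonal (funext fun i => mul_inv_cancel₀ (hd i))

namespace IsHermitian
variable {A : Matrix ι ι ℝ} (hA : A.IsHermitian) (θ : ℝ)

lemma one_sub_smul_eq_conjStarAlgAut :
    1 - θ • A = conjStarAlgAut ℝ _ hA.eigenvectorUnitary
      (diagonal fun i => 1 - θ * hA.eigenvalues i) := by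
  conv_lhs => rw [hA.spectral_theorem]
  rw [← map_smul, ← map_one (conjStarAlgAut ℝ _ hA.eigenvectorUnitary), ← map_sub, ← diagonal_one,
    ← diagonal_smul, ← diagonal_sub]
  rfl

lemma det_one_sub_smul : (1 - θ • A).det = ∏ i, (1 - θ * hA.eigenvalues i) := by
  rw [hA.one_sub_smul_eq_conjStarAlgAut, det_conjStarAlgAut, det_diagonal]

lemma trace_inv_one_sub_smul (hθ : ∀ i, 1 - θ * hA.eigenvalues i ≠ 0) :
    ((1 - θ • A)⁻¹).trace = ∑ i, (1 - θ * hA.eigenvalues i)⁻¹ := by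
  rw [hA.one_sub_smul_eq_conjStarAlgAut, inv_conjStarAlgAut, trace_conjStarAlgAut,
    inv_diagonal_of_ne_zero hθ, trace_diagonal]
  rfl

lemma neg_log_det_add_trace_eq_sum (hθ : ∀ i, 1 - θ * hA.eigenvalues i ≠ 0) :
    -Real.log (1 - θ • A).det + ((1 - θ • A)⁻¹ - 1).trace =
      ∑ i, (-Real.log (1 - θ * hA.eigenvalues i) + ((1 - θ * hA.eigenvalues i)⁻¹ - 1)) := by
  rw [hA.det_one_sub_smul, Real.log_prod fun i _ => hθ i, trace_sub, hA.trace_inv_one_sub_smul θ hθ,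
    trace_one, Finset.sum_add_distrib, Finset.sum_neg_distrib, Finset.sum_sub_distrib]
  simp

end IsHermitian
end Matrix

/-- For every c > 0 there is a unique θ ∈ (0, 1/λ) with
  -log det(I - θP) + tr((I - θP)⁻¹ - I) = c. -/
theorem stmt_4 {n : ℕ} (P : Matrix (Fin n) (Fin n) ℝ) (hP : P.PosDef)
    (lam : ℝ) (hlam : IsGreatest (Set.range hP.1.eigenvalues) lam)
    (c : ℝ) (hc : 0 < c) :
    ∃! θ : ℝ, θ ∈ Set.Ioo 0 (1 / lam) ∧
      -Real.log ((1 - θ • P).det) + Matrix.trace ((1 - θ • P)⁻¹ - 1) = c := by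
  obtain ⟨i₀, hi₀⟩ := hlam.1
  have hμ : ∀ i, 0 < hP.1.eigenvalues i := hP.eigenvalues_pos
  have hle : ∀ i, hP.1.eigenvalues i ≤ lam := fun i => hlam.2 ⟨i, rfl⟩
  have : Nonempty (Fin n) := ⟨i₀⟩
  have hexpr : ∀ θ ∈ Ioo 0 (1 / lam),
      -Real.log ((1 - θ • P).det) + Matrix.trace ((1 - θ • P)⁻¹ - 1) =
        ∑ i, (-Real.log (1 - θ * hP.1.eigenvalues i) + ((1 - θ * hP.1.eigenvalues i)⁻¹ - 1)) :=
    fun θ hθ => hP.1.neg_log_det_add_trace_eq_sum θ fun i =>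
      (one_sub_mul_pos (hle i) (Ioo_subset_Ico_self hθ)).ne'
  obtain ⟨θ₀, hθ₀, hθ₀c⟩ := exists_mem_Ico_inv_one_sub_mul_sub_one_eq (hi₀ ▸ hμ i₀) hc.le
  obtain ⟨θ, ⟨hθ, hθc⟩, huniq⟩ := existsUnique_mem_Ioo_eq_of_strictMonoOn
    (strictMonoOn_sum_neg_log_add_inv_sub_one hμ hle) (continuousOn_sum_neg_log_add_inv_sub_one hle)
    (by simpa using hc) hθ₀ (hθ₀c ▸ inv_one_sub_mul_sub_one_le_sum (fun i => (hμ i).le) hle hi₀ hθ₀)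
  exact ⟨θ, ⟨hθ, (hexpr θ hθ).trans hθc⟩,
    fun θ' ⟨hθ', h⟩ => huniq θ' ⟨hθ', (hexpr θ' hθ').symm.trans h⟩⟩
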